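/- For every real u, Ai(iu) ≠ 0; that is, the Airy function Ai has no zeros on the imaginary axis. -/

import Mathlib

open Complex

/-- The Airy function `Ai`, defined by its power series. -/
noncomputable def Ai (z : ℂ) : ℂ :=
  (3 : ℂ) ^ (-(2 : ℂ) / 3) *
      ∑' n : ℕ, z ^ (3 * n) / ((9 : ℂ) ^ n * (Nat.factorial n : ℂ) * Complex.Gamma ((n : ℂ) + 2 / 3)) -
    (3 : ℂ) ^ (-(4 : ℂ) / 3) *
      ∑' n : ℕ, z ^ (3 * n + 1) / ((9 : ℂ) ^ n * (Nat.factorial n : ℂ) * Complex.Gamma ((n : ℂ) + 4 / 3))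

/-!
`Ai` solves the Airy equation `w'' = z w`, so along the imaginary axis `F t = Ai (I t)` satisfies
`F'' = -I t F`, and `H t = Re (conj (Ai (I t)) * Ai' (I t))` has derivative `-t |F t|²`. Hence `H`
is maximal at `t = 0`, where `H 0 = Ai 0 * Ai' 0 < 0`, whereas a zero of `F` at `u` gives `H u = 0`.

The Airy equation is checked on the two power series of `Ai`: by `Γ (s + 1) = s Γ s`, consecutive
denominators `9ⁿ n! Γ (n + c)` differ by exactly the factor that differentiating `z ^ (3n + k)`
twice produces.
-/

open Set
open scoped Nat ComplexConjugate

def SummableOnDiscs (g : ℕ → ℂ) (m : ℕ → ℕ) : Prop :=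
  ∀ R : ℝ, 1 ≤ R → Summable fun n => ‖g n‖ * R ^ m n

namespace SummableOnDiscs

variable {g : ℕ → ℂ} {m : ℕ → ℕ}

theorem summable (hg : SummableOnDiscs g m) (z : ℂ) : Summable fun n => g n * z ^ m n := by
  refine .of_norm <| .of_nonneg_of_le (fun n => norm_nonneg _) (fun n => ?_)
    (hg (‖z‖ + 1) (by simp))
  rw [norm_mul, norm_pow]
  gcongr
  linarith

theorem mul_natCast_sub_one (hg : SummableOnDiscs g m) :
    SummableOnDiscs (fun n => g n * m n) (fun n => m n - 1) := by
  intro R hR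
  refine .of_nonneg_of_le (fun n => by positivity) (fun n => ?_) (hg (2 * R) (by linarith))
  calc ‖g n * m n‖ * R ^ (m n - 1) ≤ ‖g n‖ * (2 ^ m n * R ^ m n) := by
        rw [norm_mul, Complex.norm_natCast, mul_assoc]
        gcongr
        · exact_mod_cast (Nat.lt_two_pow_self).le
        · exact Nat.sub_le _ _
    _ = ‖g n‖ * (2 * R) ^ m n := by rw [mul_pow]

theorem hasDerivAt (hg : SummableOnDiscs g m) (z : ℂ) :
    HasDerivAt (fun w => ∑' n, g n * w ^ m n) (∑' n, g n * m n * z ^ (m n - 1)) z := by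
  set R := ‖z‖ + 1
  have hR : 1 ≤ R := by simp [R]
  have hz : z ∈ Metric.ball (0 : ℂ) R := by simp [R]
  have hderiv (n : ℕ) (y : ℂ) (_ : y ∈ Metric.ball (0 : ℂ) R) :
      HasDerivAt (fun w => g n * w ^ m n) (g n * m n * y ^ (m n - 1)) y := by
    simpa only [mul_assoc] using (hasDerivAt_pow (m n) y).const_mul (g n)
  have hbound (n : ℕ) (y : ℂ) (hy : y ∈ Metric.ball (0 : ℂ) R) :
      ‖g n * m n * y ^ (m n - 1)‖ ≤ ‖g n * m n‖ * R ^ (m n - 1) := by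
    rw [norm_mul, norm_pow]
    gcongr
    exact (mem_ball_zero_iff.mp hy).le
  exact hasDerivAt_tsum_of_isPreconnected (hg.mul_natCast_sub_one R hR) Metric.isOpen_ball
    (convex_ball 0 R).isPreconnected hderiv hbound hz (hg.summable z) hz

end SummableOnDiscs

theorem le_of_hasDerivAt_of_sub_mul_nonpos {h h' : ℝ → ℝ} (hh : ∀ t, HasDerivAt h (h' t) t)
    {a : ℝ} (hsign : ∀ t, (t - a) * h' t ≤ 0) (t : ℝ) : h t ≤ h a := by
  have hcont : Continuous h := continuous_iff_continuousAt.2 fun t => (hh t).continuousAt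
  rcases le_total t a with hta | hat
  · refine monotoneOn_of_hasDerivWithinAt_nonneg (convex_Iic a) hcont.continuousOn
      (fun x _ => (hh x).hasDerivWithinAt) (fun x hx => ?_) hta self_mem_Iic hta
    rw [interior_Iic] at hx
    nlinarith [hsign x, mem_Iio.mp hx]
  · refine antitoneOn_of_hasDerivWithinAt_nonpos (convex_Ici a) hcont.continuousOn
      (fun x _ => (hh x).hasDerivWithinAt) (fun x hx => ?_) self_mem_Ici hat hat
    rw [interior_Ici] at hx
    nlinarith [hsign x, mem_Ioi.mp hx]

section AiryEquation

variable {f f' : ℂ → ℂ}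

theorem hasDerivAt_re_conj_mul_comp_mul_I (hf : ∀ z, HasDerivAt f (f' z) z)
    (hf' : ∀ z, HasDerivAt f' (z * f z) z) (t : ℝ) :
    HasDerivAt (fun s : ℝ => (conj (f (I * s)) * f' (I * s)).re)
      (-t * normSq (f (I * t))) t := by
  have hI : HasDerivAt (fun w : ℂ => I * w) I t := by
    simpa using (hasDerivAt_id (t : ℂ)).const_mul I
  have hF := ((hf (I * t)).comp (t : ℂ) hI).comp_ofReal
  have hF' := ((hf' (I * t)).comp (t : ℂ) hI).comp_ofReal
  refine (reCLM.hasFDerivAt.comp_hasDerivAt t (hF.star.mul hF')).congr_deriv ?_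
  simp only [star_mul', RCLike.star_def, conj_I, mul_neg, Function.comp_apply, neg_mul,
    reCLM_apply, add_re, neg_re, mul_re, conj_re, I_re, mul_zero, conj_im, I_im, mul_one,
    sub_neg_eq_add, zero_add, mul_im, add_zero, neg_sub, ofReal_re, zero_mul, ofReal_im, sub_self,
    one_mul, zero_sub, neg_neg, normSq_apply]
  ring

theorem re_conj_mul_deriv_nonneg_of_eq_zero (hf : ∀ z, HasDerivAt f (f' z) z)
    (hf' : ∀ z, HasDerivAt f' (z * f z) z) {u : ℝ} (hu : f (I * u) = 0) :
    0 ≤ (conj (f 0) * f' 0).re := by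
  have hmax := le_of_hasDerivAt_of_sub_mul_nonpos (hasDerivAt_re_conj_mul_comp_mul_I hf hf')
    (a := 0) (fun t => by nlinarith [mul_nonneg (mul_self_nonneg t) (normSq_nonneg (f (I * t)))])
    u
  simpa [hu] using hmax

end AiryEquation

noncomputable def airyDenom (c : ℂ) (n : ℕ) : ℂ := 9 ^ n * (n ! : ℂ) * Gamma (n + c)

theorem airyDenom_zero (c : ℂ) : airyDenom c 0 = Gamma c := by
  simp [airyDenom]

section AiryDenom

variable {c : ℂ}

theorem airyDenom_succ (hc : 0 < c.re) (n : ℕ) :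
    airyDenom c (n + 1) = 9 * (n + 1) * (n + c) * airyDenom c n := by
  have hnc : (n : ℂ) + c ≠ 0 :=
    ne_of_apply_ne re (by simp only [add_re, natCast_re, zero_re, ne_eq]; positivity)
  rw [airyDenom, airyDenom, Nat.cast_succ, add_right_comm, Gamma_add_one _ hnc, Nat.factorial_succ]
  push_cast
  ring

theorem norm_airyDenom_ge (hc : 0 < c.re) (n : ℕ) :
    (9 * c.re) ^ n * n ! * ‖Gamma c‖ ≤ ‖airyDenom c n‖ := by
  induction n with
  | zero => simp [airyDenom_zero]
  | succ n ih =>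
    have hnc : c.re ≤ ‖(n : ℂ) + c‖ := by
      calc c.re ≤ ((n : ℂ) + c).re := by simp
        _ ≤ ‖(n : ℂ) + c‖ := Complex.re_le_norm _
    rw [airyDenom_succ hc, norm_mul, norm_mul, norm_mul, Nat.factorial_succ]
    calc (9 * c.re) ^ (n + 1) * ↑((n + 1) * n !) * ‖Gamma c‖
        = 9 * (n + 1) * c.re * ((9 * c.re) ^ n * n ! * ‖Gamma c‖) := by push_cast; ring
      _ ≤ 9 * (n + 1) * ‖(n : ℂ) + c‖ * ‖airyDenom c n‖ := by gcongr
      _ = ‖(9 : ℂ)‖ * ‖(n : ℂ) + 1‖ * ‖(n : ℂ) + c‖ * ‖airyDenom c n‖ := by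
        norm_cast

theorem summableOnDiscs_inv_airyDenom (hc : 0 < c.re) (k : ℕ) :
    SummableOnDiscs (fun n => (airyDenom c n)⁻¹) (fun n => 3 * n + k) := by
  intro R hR
  have hΓ : 0 < ‖Gamma c‖ := norm_pos_iff.mpr (Gamma_ne_zero_of_re_pos hc)
  refine .of_nonneg_of_le (fun n => by positivity) (fun n => ?_)
    ((Real.summable_pow_div_factorial (R ^ 3 / (9 * c.re))).mul_right (R ^ k / ‖Gamma c‖))
  have hlow := norm_airyDenom_ge hc n
  rw [norm_inv]
  calc ‖airyDenom c n‖⁻¹ * R ^ (3 * n + k)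
      ≤ ((9 * c.re) ^ n * n ! * ‖Gamma c‖)⁻¹ * R ^ (3 * n + k) := by
        gcongr
      _ = (R ^ 3 / (9 * c.re)) ^ n / n ! * (R ^ k / ‖Gamma c‖) := by
        rw [pow_add, pow_mul, div_pow]; field_simp

end AiryDenom

noncomputable def airySeries (c : ℂ) (k : ℕ) (z : ℂ) : ℂ :=
  ∑' n, z ^ (3 * n + k) / airyDenom c n

noncomputable def airySeriesDeriv (c : ℂ) (k : ℕ) (z : ℂ) : ℂ :=
  ∑' n, (airyDenom c n)⁻¹ * (3 * n + k : ℕ) * z ^ (3 * n + k - 1)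

section AirySeries

variable {c : ℂ}

theorem hasDerivAt_airySeries (hc : 0 < c.re) (k : ℕ) (z : ℂ) :
    HasDerivAt (airySeries c k) (airySeriesDeriv c k z) z := by
  have h : airySeries c k = fun w => ∑' n, (airyDenom c n)⁻¹ * w ^ (3 * n + k) := by
    funext w
    simp_rw [airySeries, div_eq_inv_mul]
  rw [h]
  exact (summableOnDiscs_inv_airyDenom hc k).hasDerivAt z

variable {k : ℕ}

theorem re_pos_of_three_mul_eq (hck : 3 * c = 2 * k + 2) : 0 < c.re := by
  have h : 3 * c.re = 2 * k + 2 := by simpa using congrArg re hck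
  linarith [(k.cast_nonneg : (0 : ℝ) ≤ k)]

/- Differentiating `z ^ (3 * (n + 1) + k)` twice produces the factor `9 * (n + 1) * (n + c)` of
`airyDenom_succ` exactly for the two series of `Ai`: `(k, c) = (0, 2 / 3)` and `(1, 4 / 3)`. -/
theorem inv_airyDenom_succ_mul (hk : k ≤ 1) (hck : 3 * c = 2 * k + 2) (n : ℕ) :
    (airyDenom c (n + 1))⁻¹ * ((3 * (n + 1) + k : ℕ) : ℂ) *
      ((3 * (n + 1) + k - 1 : ℕ) : ℂ) = (airyDenom c n)⁻¹ := by
  have hc := re_pos_of_three_mul_eq hck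
  have hcoeff : ((3 * (n + 1) + k : ℕ) : ℂ) * ((3 * (n + 1) + k - 1 : ℕ) : ℂ) =
      9 * (n + 1) * (n + c) := by
    rw [show 3 * (n + 1) + k - 1 = 3 * n + k + 2 by omega]
    interval_cases k <;> push_cast at hck ⊢ <;> linear_combination (-3 * (n : ℂ) - 3) * hck
  have hne : 9 * ((n : ℂ) + 1) * (n + c) ≠ 0 := by
    rw [← hcoeff]
    exact mul_ne_zero (by norm_cast; omega) (by norm_cast; omega)
  rw [mul_assoc, hcoeff, airyDenom_succ hc, mul_inv_rev, inv_mul_cancel_right₀ hne]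

theorem hasDerivAt_airySeriesDeriv (hk : k ≤ 1) (hck : 3 * c = 2 * k + 2) (z : ℂ) :
    HasDerivAt (airySeriesDeriv c k) (z * airySeries c k z) z := by
  have hsummable :=
    (summableOnDiscs_inv_airyDenom (re_pos_of_three_mul_eq hck) k).mul_natCast_sub_one
  refine (hsummable.hasDerivAt z).congr_deriv ?_
  rw [(hsummable.mul_natCast_sub_one.summable z).tsum_eq_zero_add, airySeries, ← tsum_mul_left]
  have hfirst : (airyDenom c 0)⁻¹ * ((3 * 0 + k : ℕ) : ℂ) * ((3 * 0 + k - 1 : ℕ) : ℂ) *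
      z ^ (3 * 0 + k - 1 - 1) = 0 := by
    interval_cases k <;> simp
  rw [hfirst, zero_add]
  refine tsum_congr fun n => ?_
  rw [inv_airyDenom_succ_mul hk hck, show 3 * (n + 1) + k - 1 - 1 = 3 * n + k + 1 by omega,
    pow_succ]
  ring

end AirySeries

theorem airySeries_zero_zero (c : ℂ) : airySeries c 0 0 = (Gamma c)⁻¹ := by
  rw [airySeries, tsum_eq_single 0 fun n hn => by simp [hn], airyDenom_zero]
  simp

theorem airySeries_one_zero (c : ℂ) : airySeries c 1 0 = 0 := by
  simp [airySeries]

theorem airySeriesDeriv_zero_zero (c : ℂ) : airySeriesDeriv c 0 0 = 0 := by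
  rw [airySeriesDeriv, tsum_eq_single 0 fun n hn => by simp [show 3 * n - 1 ≠ 0 by omega]]
  simp

theorem airySeriesDeriv_one_zero (c : ℂ) : airySeriesDeriv c 1 0 = (Gamma c)⁻¹ := by
  rw [airySeriesDeriv, tsum_eq_single 0 fun n hn => by simp [hn], airyDenom_zero]
  simp

noncomputable def Ai' (z : ℂ) : ℂ :=
  (3 : ℂ) ^ (-(2 : ℂ) / 3) * airySeriesDeriv (2 / 3) 0 z -
    (3 : ℂ) ^ (-(4 : ℂ) / 3) * airySeriesDeriv (4 / 3) 1 z

theorem Ai_eq_airySeries (z : ℂ) : Ai z =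
    (3 : ℂ) ^ (-(2 : ℂ) / 3) * airySeries (2 / 3) 0 z -
      (3 : ℂ) ^ (-(4 : ℂ) / 3) * airySeries (4 / 3) 1 z :=
  rfl

theorem hasDerivAt_Ai (z : ℂ) : HasDerivAt Ai (Ai' z) z :=
  ((hasDerivAt_airySeries (by norm_num) 0 z).const_mul _).sub
    ((hasDerivAt_airySeries (by norm_num) 1 z).const_mul _)

theorem hasDerivAt_Ai' (z : ℂ) : HasDerivAt Ai' (z * Ai z) z := by
  have h := ((hasDerivAt_airySeriesDeriv (c := 2 / 3) (k := 0) zero_le_one (by norm_num)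
    z).const_mul ((3 : ℂ) ^ (-(2 : ℂ) / 3))).sub
    ((hasDerivAt_airySeriesDeriv (c := 4 / 3) (k := 1) le_rfl (by norm_num) z).const_mul
      ((3 : ℂ) ^ (-(4 : ℂ) / 3)))
  rw [Ai_eq_airySeries]
  refine h.congr_deriv ?_
  ring

theorem Ai_zero : Ai 0 = (3 : ℂ) ^ (-(2 : ℂ) / 3) / Gamma (2 / 3) := by
  simp [Ai_eq_airySeries, airySeries_zero_zero, airySeries_one_zero, div_eq_mul_inv]

theorem Ai'_zero : Ai' 0 = -((3 : ℂ) ^ (-(4 : ℂ) / 3) / Gamma (4 / 3)) := by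
  simp [Ai', airySeriesDeriv_zero_zero, airySeriesDeriv_one_zero, div_eq_mul_inv]

theorem re_conj_Ai_zero_mul_Ai'_zero_neg : (conj (Ai 0) * Ai' 0).re < 0 := by
  have h₁ : (3 : ℂ) ^ (-(2 : ℂ) / 3) / Gamma (2 / 3) =
      ((3 : ℝ) ^ (-(2 : ℝ) / 3) / Real.Gamma (2 / 3) : ℝ) := by
    rw [ofReal_div, ofReal_cpow (by norm_num), ← Gamma_ofReal]; push_cast; rfl
  have h₂ : (3 : ℂ) ^ (-(4 : ℂ) / 3) / Gamma (4 / 3) =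
      ((3 : ℝ) ^ (-(4 : ℝ) / 3) / Real.Gamma (4 / 3) : ℝ) := by
    rw [ofReal_div, ofReal_cpow (by norm_num), ← Gamma_ofReal]; push_cast; rfl
  have := Real.Gamma_pos_of_pos (by norm_num : (0 : ℝ) < 2 / 3)
  have := Real.Gamma_pos_of_pos (by norm_num : (0 : ℝ) < 4 / 3)
  rw [Ai_zero, Ai'_zero, h₁, h₂, conj_ofReal, mul_neg, neg_re, ← ofReal_mul, ofReal_re,
    neg_neg_iff_pos]
  positivity

/-- The Airy function `Ai` has no zeros on the imaginary axis. -/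
theorem airy_ne_zero_on_imaginary_axis (u : ℝ) : Ai (Complex.I * u) ≠ 0 := fun h =>
  re_conj_Ai_zero_mul_Ai'_zero_neg.not_ge
    (re_conj_mul_deriv_nonneg_of_eq_zero hasDerivAt_Ai hasDerivAt_Ai' h)
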